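/- Fix positive reals g₁₁,g₁₂,g₂₁,g₂₂ with g₂₂ > g₁₂, and for SNR > 0 define ψ(x) = 1 + SNR·x and Δ₄(SNR) = 2log₂2 − 2log₂(1 + (g₂₂/g₂₁)·ψ(g₂₁)/ψ(g₁₂)) − log₂(1 + (g₂₁/g₂₂)·ψ(g₁₂)/ψ(g₂₁)) + log₂(g₂₂/g₂₁ + ψ(g₂₂−g₁₂)). Then Δ₄(SNR) → +∞ as SNR → +∞. -/

import Mathlib

open Filter

/-- Ratio of affine functions tends to ratio of slopes. -/
lemma ratio_tendsto (a b : ℝ) (ha : 0 < a) (hb : 0 < b) :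
    Tendsto (fun x : ℝ => (1 + x * a) / (1 + x * b)) atTop (nhds (a / b)) := by
  have h1 : Tendsto (fun x : ℝ => (x⁻¹ + a) / (x⁻¹ + b)) atTop (nhds ((0 + a) / (0 + b))) := by
    exact Tendsto.div (tendsto_inv_atTop_zero.add tendsto_const_nhds)
      (tendsto_inv_atTop_zero.add tendsto_const_nhds) (by positivity)
  rw [zero_add, zero_add] at h1
  refine h1.congr' ?_
  filter_upwards [eventually_gt_atTop (0 : ℝ)] with x hx
  field_simp

lemma logb_tendsto {f : ℝ → ℝ} {c : ℝ} (hc : 0 < c)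
    (hf : Tendsto f atTop (nhds c)) :
    Tendsto (fun x => Real.logb 2 (f x)) atTop (nhds (Real.logb 2 c)) := by
  simp only [Real.logb]
  exact ((Real.continuousAt_log hc.ne').tendsto.comp hf).div_const _

/-- With `ψ(x) = 1 + SNR·x` and `g₂₂ > g₁₂`, the spectral-efficiency gap
`Δ₄(SNR)` between the second channel selection NE and the power allocation NE
tends to `+∞` as `SNR → ∞`. -/
theorem delta4_tendsto_atTop (g11 g12 g21 g22 : ℝ)
    (h11 : 0 < g11) (h12 : 0 < g12) (h21 : 0 < g21) (h22 : 0 < g22)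
    (hgt : g12 < g22) :
    Tendsto (fun snr : ℝ =>
      2 * Real.logb 2 2
      - 2 * Real.logb 2 (1 + g22 / g21 * ((1 + snr * g21) / (1 + snr * g12)))
      - Real.logb 2 (1 + g21 / g22 * ((1 + snr * g12) / (1 + snr * g21)))
      + Real.logb 2 (g22 / g21 + (1 + snr * (g22 - g12))))
      atTop atTop := by
  have hA : Tendsto (fun snr : ℝ =>
      Real.logb 2 (1 + g22 / g21 * ((1 + snr * g21) / (1 + snr * g12))))
      atTop (nhds (Real.logb 2 (1 + g22 / g21 * (g21 / g12)))) := by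
    refine logb_tendsto (by positivity) ?_
    exact tendsto_const_nhds.add (tendsto_const_nhds.mul (ratio_tendsto g21 g12 h21 h12))
  have hB : Tendsto (fun snr : ℝ =>
      Real.logb 2 (1 + g21 / g22 * ((1 + snr * g12) / (1 + snr * g21))))
      atTop (nhds (Real.logb 2 (1 + g21 / g22 * (g12 / g21)))) := by
    refine logb_tendsto (by positivity) ?_
    exact tendsto_const_nhds.add (tendsto_const_nhds.mul (ratio_tendsto g12 g21 h12 h21))
  have hL : Tendsto (fun snr : ℝ =>
      Real.logb 2 (g22 / g21 + (1 + snr * (g22 - g12)))) atTop atTop := by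
    refine (Real.tendsto_logb_atTop (by norm_num)).comp ?_
    refine tendsto_atTop_add_const_left _ _ ?_
    refine tendsto_atTop_add_const_left _ _ ?_
    exact tendsto_id.atTop_mul_const (sub_pos.2 hgt)
  have hC : Tendsto (fun snr : ℝ =>
      2 * Real.logb 2 2
      - 2 * Real.logb 2 (1 + g22 / g21 * ((1 + snr * g21) / (1 + snr * g12)))
      - Real.logb 2 (1 + g21 / g22 * ((1 + snr * g12) / (1 + snr * g21))))
      atTop (nhds (2 * Real.logb 2 2 - 2 * Real.logb 2 (1 + g22 / g21 * (g21 / g12))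
        - Real.logb 2 (1 + g21 / g22 * (g12 / g21)))) :=
    (tendsto_const_nhds.sub (tendsto_const_nhds.mul hA)).sub hB
  exact hC.add_atTop hL
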